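/- With α, r_α, β, r_β as in the construction: for every substitution h that is r_α-valid on α, we have h(α) ∉ L_E(β, r_β) if and only if h(α) = v w' v for some word w' ∈ { 0u0 : u ∈ Σ*, |u|_{###} = 0 } such that w' ∉ L_E(γᵢ, r_β) for every i ∈ {1,…,μ}. -/

import Mathlib

/-- The binary alphabet `{0, #}`: `false` represents `0`, `true` represents `#`. -/
abbrev Bin := Bool

/-- Patterns over `Σ ∪ X` with `Σ = Bin` and variable set `X = ℕ`. -/
abbrev Pattern := List (Bin ⊕ ℕ)

/-- Applying a substitution (determined by its action on variables, and fixing every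
terminal) to a pattern. -/
def applySub (s : ℕ → List Bin) : Pattern → List Bin
  | [] => []
  | c :: p => Sum.elim (fun a => [a]) s c ++ applySub s p

/-- The set of variables occurring in a pattern. -/
def varsOf (p : Pattern) : Set ℕ := {x | Sum.inr x ∈ p}

/-- A substitution is `r`-valid on `p` if every variable occurring in `p` is mapped into
its constraint language. -/
def Valid (r : ℕ → Set (List Bin)) (p : Pattern) (s : ℕ → List Bin) : Prop :=
  ∀ x ∈ varsOf p, s x ∈ r x

/-- The erasing constrained pattern language `L_E(p, r)`. -/
def LangE (p : Pattern) (r : ℕ → Set (List Bin)) : Set (List Bin) :=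
  {w | ∃ s, Valid r p s ∧ applySub s p = w}

/-- The word `v = 0###0`. -/
def vWord : List Bin := [false, true, true, true, false]

/-- `u` contains no occurrence of `###` as a factor, i.e. `|u|_{###} = 0`. -/
def NoTripleHash (u : List Bin) : Prop := ¬ ([true, true, true] <:+: u)

/-- The constraint language of the variable `α₁`:
`{0w0 : w ∈ Σ*, |w|_{###} = 0} ∪ {ε}`. -/
def Ra1 : Set (List Bin) :=
  {w | ∃ u, NoTripleHash u ∧ w = [false] ++ u ++ [false]} ∪ {[]}

/-- The constraint language of the variable `ỹ`:
`Σ* \ { v u v : u ∈ Ra1, u ≠ ε }`. -/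
def Ryt : Set (List Bin) :=
  {w | ¬ ∃ u ∈ Ra1, u ≠ [] ∧ w = vWord ++ u ++ vWord}

/-- All the data and assumptions of the construction: the patterns with regular
constraints `(α, r_α)` and `(β, r_β)` built from the predicates `γ₁, …, γ_μ`. -/
structure Construction where
  /-- the variable `x_v` of `α` -/
  xv : ℕ
  /-- the variable `α₁` of `α` -/
  a1 : ℕ
  /-- the variable `ỹ` of `α` -/
  yt : ℕ
  /-- the number of predicates -/
  μ : ℕ
  /-- the variables `x₁, …, x_μ` of `β` -/
  xs : Fin μ → ℕ
  /-- the terminal-free predicate patterns `γ₁, …, γ_μ` (words over variables) -/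
  γ : Fin μ → List ℕ
  /-- the variable `z̃` of `β` -/
  zt : ℕ
  /-- the constraint `r_α` -/
  rα : ℕ → Set (List Bin)
  /-- the constraint `r_β` -/
  rβ : ℕ → Set (List Bin)
  xv_ne_a1 : xv ≠ a1
  xv_ne_yt : xv ≠ yt
  a1_ne_yt : a1 ≠ yt
  hxv : rα xv = {[], vWord}
  ha1 : rα a1 = Ra1
  hyt : rα yt = Ryt
  xs_inj : Function.Injective xs
  xs_ne_zt : ∀ i, xs i ≠ zt
  xs_fresh : ∀ i, xs i ≠ xv ∧ xs i ≠ a1 ∧ xs i ≠ yt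
  zt_fresh : zt ≠ xv ∧ zt ≠ a1 ∧ zt ≠ yt
  γ_disj : ∀ i j, i ≠ j → ∀ x ∈ γ i, x ∉ γ j
  γ_fresh : ∀ i, ∀ x ∈ γ i,
    (∀ j, x ≠ xs j) ∧ x ≠ zt ∧ x ≠ xv ∧ x ≠ a1 ∧ x ≠ yt
  hrβxs : ∀ i, rβ (xs i) = {[], vWord}
  hrβzt : rβ zt = Ryt
  hrβγ_eps : ∀ i, ∀ x ∈ γ i, [] ∈ rβ x
  hγ_lang : ∀ i, ∀ w ∈ LangE ((γ i).map Sum.inr) rβ,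
    w = [] ∨ ∃ u, NoTripleHash u ∧ w = [false] ++ u ++ [false]

/-- The pattern `α = x_v α₁ x_v ỹ`. -/
def Construction.α (C : Construction) : Pattern :=
  [Sum.inr C.xv, Sum.inr C.a1, Sum.inr C.xv, Sum.inr C.yt]

/-- The pattern `β̂ᵢ = xᵢ γᵢ xᵢ`. -/
def Construction.βhat (C : Construction) (i : Fin C.μ) : Pattern :=
  Sum.inr (C.xs i) :: ((C.γ i).map Sum.inr ++ [Sum.inr (C.xs i)])

/-- The pattern `β = β̂₁ ⋯ β̂_μ z̃`. -/
def Construction.β (C : Construction) : Pattern :=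
  (List.ofFn C.βhat).flatten ++ [Sum.inr C.zt]

/-!
A block `x_i γ_i x_i` with `x_i = ε` and `γ_i ≠ ε` cannot start `v`, since `0u0` with
`|u|_{###} = 0` and `v = 0###0` are not prefix-comparable; and in `0u0 v` the first `###`
is the one of `v`, so `0u0 v R = 0u'0 v` forces `u = u'` and `R = ε`.
Hence `v w' v` (`w'` of that form) is generated by `β` only if some `γ_i` generates `w'`: all
other blocks are empty, and `z̃` cannot be `v w' v` itself. Conversely, every word outside
`{v w' v}` is generated by sending `z̃` to it, and `v w' v` is generated from a `γ_i` producing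
`w'` by setting `x_i = v` and erasing everything else.
-/

def Framed (w : List Bin) : Prop := ∃ u, NoTripleHash u ∧ w = [false] ++ u ++ [false]

lemma Framed.ne_nil {w : List Bin} (hw : Framed w) : w ≠ [] := by
  obtain ⟨u, -, rfl⟩ := hw
  simp

lemma NoTripleHash.of_cons {a : Bin} {u : List Bin} (hu : NoTripleHash (a :: u)) :
    NoTripleHash u :=
  fun h => hu (h.trans (List.suffix_cons a u).isInfix)

lemma not_noTripleHash_of_triple_append_eq {u X Y : List Bin}
    (h : u ++ false :: X = [true, true, true] ++ Y) : ¬ NoTripleHash u := by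
  rcases u with _ | ⟨a, _ | ⟨b, _ | ⟨c, u⟩⟩⟩ <;> simp_all [NoTripleHash]
  exact ⟨[], u, rfl⟩

lemma NoTripleHash.cons_append_sep_ne {b : Bin} {u X Y : List Bin} (hu : NoTripleHash (b :: u)) :
    b :: u ++ [false, false, true, true, true] ++ X ≠ [false, false, true, true, true] ++ Y := by
  intro h
  rcases u with _ | ⟨c, u⟩
  · simp_all
  · simp only [List.cons_append, List.cons.injEq] at h
    exact not_noTripleHash_of_triple_append_eq (by simpa using h.2.2) hu.of_cons.of_cons

lemma NoTripleHash.append_sep_inj {u u' X Y : List Bin} (hu : NoTripleHash u)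
    (hu' : NoTripleHash u')
    (h : u' ++ [false, false, true, true, true] ++ X = u ++ [false, false, true, true, true] ++ Y) :
    u' = u ∧ X = Y := by
  induction u generalizing u' with
  | nil =>
    rcases u' with _ | ⟨b, u'⟩
    · simpa using h
    · exact absurd h hu'.cons_append_sep_ne
  | cons a u ih =>
    rcases u' with _ | ⟨b, u'⟩
    · exact absurd h.symm hu.cons_append_sep_ne
    · simp only [List.cons_append, List.cons.injEq] at h
      obtain ⟨rfl, h⟩ := h
      obtain ⟨rfl, rfl⟩ := ih hu.of_cons hu'.of_cons h
      simp

lemma Framed.append_ne_vWord_append {w t t' : List Bin} (hw : Framed w) :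
    w ++ t' ≠ vWord ++ t := by
  obtain ⟨u, hu, rfl⟩ := hw
  intro h
  simp only [vWord, List.append_assoc, List.cons_append, List.cons.injEq, true_and] at h
  exact not_noTripleHash_of_triple_append_eq (by simpa using h) hu

lemma Framed.eq_of_append_vWord_eq {w w' R : List Bin} (hw : Framed w) (hw' : Framed w')
    (h : w' ++ vWord ++ R = w ++ vWord) : w' = w ∧ R = [] := by
  obtain ⟨u, hu, rfl⟩ := hw
  obtain ⟨u', hu', rfl⟩ := hw'
  have := hu.append_sep_inj hu' (X := false :: R) (Y := [false]) (by simpa [vWord] using h)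
  simp_all

lemma block_eq_nil_or_eq {x g w R : List Bin} (hx : x = [] ∨ x = vWord) (hg : g = [] ∨ Framed g)
    (hw : Framed w) (h : x ++ g ++ x ++ R = vWord ++ w ++ vWord) : x ++ g ++ x = [] ∨ g = w := by
  rcases hx with rfl | rfl <;> rcases hg with rfl | hg
  · simp
  · exact absurd (by simpa using h) hg.append_ne_vWord_append
  · exact absurd (by simpa using h.symm) hw.append_ne_vWord_append
  · exact Or.inr (hw.eq_of_append_vWord_eq hg (by simpa using h)).1

lemma exists_block_eq_of_flatten_append_eq {w z : List Bin} (hw : Framed w) (hz : z ∈ Ryt) :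
    ∀ {blocks : List (List Bin × List Bin)},
      (∀ p ∈ blocks, (p.1 = [] ∨ p.1 = vWord) ∧ (p.2 = [] ∨ Framed p.2)) →
      (blocks.map fun p => p.1 ++ p.2 ++ p.1).flatten ++ z = vWord ++ w ++ vWord →
      ∃ p ∈ blocks, p.2 = w
  | [], _, h => absurd ⟨w, Or.inl hw, hw.ne_nil, by simpa using h⟩ hz
  | (x, g) :: blocks, hb, h => by
    obtain ⟨hx, hg⟩ := hb (x, g) List.mem_cons_self
    simp only [List.map_cons, List.flatten_cons, List.append_assoc] at h
    rcases block_eq_nil_or_eq hx hg hw (by simpa only [List.append_assoc] using h) with hnil | rfl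
    · obtain ⟨p, hp, hpw⟩ := exists_block_eq_of_flatten_append_eq hw hz
        (fun p hp => hb p (List.mem_cons_of_mem _ hp))
        (by simpa only [← List.append_assoc, hnil, List.nil_append] using h)
      exact ⟨p, List.mem_cons_of_mem _ hp, hpw⟩
    · exact ⟨(x, g), List.mem_cons_self, rfl⟩

lemma applySub_append (s : ℕ → List Bin) (p q : Pattern) :
    applySub s (p ++ q) = applySub s p ++ applySub s q := by
  induction p with
  | nil => rfl
  | cons c p ih => simp [applySub, ih]

lemma applySub_map_inr (s : ℕ → List Bin) (l : List ℕ) :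
    applySub s (l.map Sum.inr) = (l.map s).flatten := by
  induction l with
  | nil => rfl
  | cons x l ih => simp [applySub, ih]

lemma applySub_flatten (s : ℕ → List Bin) (ps : List Pattern) :
    applySub s ps.flatten = (ps.map (applySub s)).flatten := by
  induction ps with
  | nil => rfl
  | cons p ps ih => simp [applySub_append, ih]

lemma mem_varsOf_map_inr {x : ℕ} {l : List ℕ} : x ∈ varsOf (l.map Sum.inr) ↔ x ∈ l := by
  simp [varsOf]

lemma List.flatten_ofFn_eq_of_forall_ne {α : Type*} {n : ℕ} (f : Fin n → List α) (i₀ : Fin n)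
    (hf : ∀ i, i ≠ i₀ → f i = []) : (List.ofFn f).flatten = f i₀ := by
  induction n with
  | zero => exact i₀.elim0
  | succ n ih =>
    rw [List.ofFn_succ, List.flatten_cons]
    rcases Fin.eq_zero_or_eq_succ i₀ with rfl | ⟨j, rfl⟩
    · simp [hf _ (Fin.succ_ne_zero _)]
    · rw [hf 0 (Fin.succ_ne_zero j).symm, ih (fun i => f i.succ) j
        (fun i hi => hf i.succ (Fin.succ_injective _ |>.ne hi))]
      rfl

lemma nil_mem_Ryt : [] ∈ Ryt := by
  simp [Ryt, vWord]

namespace Construction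

variable (C : Construction)

def blocks (s : ℕ → List Bin) : List (List Bin × List Bin) :=
  List.ofFn fun i => (s (C.xs i), applySub s ((C.γ i).map Sum.inr))

lemma applySub_β (s : ℕ → List Bin) :
    applySub s C.β = ((C.blocks s).map fun p => p.1 ++ p.2 ++ p.1).flatten ++ s C.zt := by
  rw [β, applySub_append, applySub_flatten, blocks, List.map_ofFn, List.map_ofFn]
  simp [Function.comp_def, βhat, applySub, applySub_append]

lemma mem_varsOf_β {x : ℕ} : x ∈ varsOf C.β ↔ (∃ i, x = C.xs i ∨ x ∈ C.γ i) ∨ x = C.zt := by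
  simp only [varsOf, β, βhat, List.mem_append, List.mem_flatten, List.mem_ofFn,
    exists_exists_eq_and, List.mem_cons, Sum.inr.injEq, List.mem_map, exists_eq_right,
    List.not_mem_nil, or_false, Set.mem_ofPred_eq]
  aesop

lemma mem_langE_β_of_mem_Ryt {w : List Bin} (hw : w ∈ Ryt) : w ∈ LangE C.β C.rβ := by
  classical
  refine ⟨fun x => if x = C.zt then w else [], fun x hx => ?_, ?_⟩
  · rcases C.mem_varsOf_β.1 hx with ⟨i, rfl | hx⟩ | rfl
    · simp [C.xs_ne_zt i, C.hrβxs i]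
    · simp [(C.γ_fresh i x hx).2.1, C.hrβγ_eps i x hx]
    · simpa [C.hrβzt] using hw
  · simpa [applySub_β, blocks, applySub_map_inr, C.xs_ne_zt, List.flatten_eq_nil_iff]
      using fun i x hx hzt => absurd hzt (C.γ_fresh i x hx).2.1

lemma vWord_append_append_vWord_mem_langE_β {i₀ : Fin C.μ} {g : List Bin}
    (hg : g ∈ LangE ((C.γ i₀).map Sum.inr) C.rβ) : vWord ++ g ++ vWord ∈ LangE C.β C.rβ := by
  classical
  obtain ⟨s₁, hs₁, rfl⟩ := hg
  set s : ℕ → List Bin := fun x => if x = C.xs i₀ then vWord else if x ∈ C.γ i₀ then s₁ x else []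
  have hxs_notMem (i : Fin C.μ) : C.xs i ∉ C.γ i₀ := fun hm => (C.γ_fresh i₀ _ hm).1 i rfl
  have hzt : s C.zt = [] := by
    have hzt_notMem : C.zt ∉ C.γ i₀ := fun hm => (C.γ_fresh i₀ _ hm).2.1 rfl
    simp [s, (C.xs_ne_zt i₀).symm, hzt_notMem]
  refine ⟨s, fun x hx => ?_, ?_⟩
  · rcases C.mem_varsOf_β.1 hx with ⟨i, rfl | hx⟩ | rfl
    · by_cases hi : i = i₀
      · simp [s, hi, C.hrβxs]
      · simp [s, C.xs_inj.ne hi, hxs_notMem, C.hrβxs]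
    · by_cases hx₀ : x ∈ C.γ i₀
      · simpa [s, (C.γ_fresh i₀ x hx₀).1 i₀, hx₀] using hs₁ x (mem_varsOf_map_inr.2 hx₀)
      · simpa [s, (C.γ_fresh i x hx).1 i₀, hx₀] using C.hrβγ_eps i x hx
    · simpa [hzt, C.hrβzt] using nil_mem_Ryt
  · rw [applySub_β, blocks, List.map_ofFn, List.flatten_ofFn_eq_of_forall_ne _ i₀]
    · have hγ₀ : applySub s ((C.γ i₀).map Sum.inr) = applySub s₁ ((C.γ i₀).map Sum.inr) := by
        simp only [applySub_map_inr]
        exact congrArg List.flatten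
          (List.map_congr_left fun x hx => by simp [s, (C.γ_fresh i₀ x hx).1 i₀, hx])
      simp [s, hzt, hγ₀]
    · intro i hi
      have hs_γ : ∀ x ∈ C.γ i, s x = [] := fun x hx => by
        simp [s, (C.γ_fresh i x hx).1 i₀, C.γ_disj i i₀ hi x hx]
      simpa [applySub_map_inr, List.flatten_eq_nil_iff, s, C.xs_inj.ne hi, hxs_notMem] using hs_γ

lemma exists_mem_langE_γ_of_mem_langE_β {w : List Bin} (hw : Framed w)
    (h : vWord ++ w ++ vWord ∈ LangE C.β C.rβ) : ∃ i, w ∈ LangE ((C.γ i).map Sum.inr) C.rβ := by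
  obtain ⟨s, hs, heq⟩ := h
  have hγ (i : Fin C.μ) : applySub s ((C.γ i).map Sum.inr) ∈ LangE ((C.γ i).map Sum.inr) C.rβ :=
    ⟨s, fun x hx => hs x (C.mem_varsOf_β.2 (Or.inl ⟨i, Or.inr (mem_varsOf_map_inr.1 hx)⟩)), rfl⟩
  have hblocks : ∀ p ∈ C.blocks s, (p.1 = [] ∨ p.1 = vWord) ∧ (p.2 = [] ∨ Framed p.2) := by
    simp only [blocks, List.mem_ofFn]
    rintro _ ⟨i, rfl⟩
    have hx := hs (C.xs i) (C.mem_varsOf_β.2 (Or.inl ⟨i, Or.inl rfl⟩))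
    rw [C.hrβxs i] at hx
    exact ⟨hx, C.hγ_lang i _ (hγ i)⟩
  have hz : s C.zt ∈ Ryt := C.hrβzt ▸ hs C.zt (C.mem_varsOf_β.2 (Or.inr rfl))
  obtain ⟨_, hp, rfl⟩ :=
    exists_block_eq_of_flatten_append_eq hw hz hblocks (C.applySub_β s ▸ heq)
  obtain ⟨i, rfl⟩ := List.mem_ofFn.1 hp
  exact ⟨i, hγ i⟩

end Construction

theorem not_in_beta_iff_special_avoiding_all_predicates_general (C : Construction)
    (h : ℕ → List Bin) :
    applySub h C.α ∉ LangE C.β C.rβ ↔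
      ∃ w' : List Bin,
        (∃ u, NoTripleHash u ∧ w' = [false] ++ u ++ [false]) ∧
        (∀ i : Fin C.μ, w' ∉ LangE ((C.γ i).map Sum.inr) C.rβ) ∧
        applySub h C.α = vWord ++ w' ++ vWord := by
  constructor
  · intro hw
    obtain ⟨w', hw' | hw'nil, hne, heq⟩ := not_not.mp (mt C.mem_langE_β_of_mem_Ryt hw)
    · exact ⟨w', hw', fun i hi => hw (heq ▸ C.vWord_append_append_vWord_mem_langE_β hi), heq⟩
    · exact absurd hw'nil hne
  · rintro ⟨w', hw', havoid, heq⟩ hw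
    obtain ⟨i, hi⟩ := C.exists_mem_langE_γ_of_mem_langE_β hw' (heq ▸ hw)
    exact havoid i hi

/-- For every `r_α`-valid substitution `h`, the word `h(α)` lies outside
`L_E(β, r_β)` iff `h(α) = v w' v` for some `w' ∈ {0u0 : u ∈ Σ*, |u|_{###} = 0}`
with `w' ∉ L_E(γᵢ, r_β)` for every `i`. -/
theorem not_in_beta_iff_special_avoiding_all_predicates (C : Construction)
    (h : ℕ → List Bin) (hvalid : Valid C.rα C.α h) :
    applySub h C.α ∉ LangE C.β C.rβ ↔
      ∃ w' : List Bin,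
        (∃ u, NoTripleHash u ∧ w' = [false] ++ u ++ [false]) ∧
        (∀ i : Fin C.μ, w' ∉ LangE ((C.γ i).map Sum.inr) C.rβ) ∧
        applySub h C.α = vWord ++ w' ++ vWord :=
  not_in_beta_iff_special_avoiding_all_predicates_general C h
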